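/- Assume the Y structure with P(X=x, D=d) > 0 for all x, d ∈ {0,1}. Define RD(d) := P(Y=1 | X=1, D=d) − P(Y=1 | X=0, D=d) and w_d := var(X | D=d)·P(D=d) / [ var(X | D=1)·P(D=1) + var(X | D=0)·P(D=0) ] for d ∈ {0,1}. Then w_1·RD(1) + w_0·RD(0) = h · ( p_{D=1|1} − p_{D=1|0} )^2 · P(X=1)·P(X=0)·P(Y=1)·P(Y=0) / φ, where h := − [ P(X=1)·( p_{C=1|11} − p_{C=1|10} ) + P(X=0)·( p_{C=1|01} − p_{C=1|00} ) ] · [ P(Y=1)·( p_{C=1|11} − p_{C=1|01} ) + P(Y=0)·( p_{C=1|10} − p_{C=1|00} ) ] and φ := P(D=0)·P(D=1, X=1)·P(D=1, X=0) + P(D=1)·P(D=0, X=1)·P(D=0, X=0). -/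

import Mathlib

/-!
Write `N x d = P(X = x, D = d)` and `T x d = P(X = x, Y = 1, D = d)`. For binary `X`,
`var(X | D = d) * P(D = d) = N 1 d * N 0 d / P(D = d)`, so the weighted average of the stratum
risk differences is
`(P(D = 0) * (T 1 1 * N 0 1 - T 0 1 * N 1 1) + P(D = 1) * (T 1 0 * N 0 0 - T 0 0 * N 1 0)) / φ`.

Under the Y structure `X` and `Y` are independent: summing the factorization over `C` and `D`
gives `P(X = x, Y = y) ≤ P(X = x) * P(Y = y)` in each of the four cells, and both sides sum
to one. So every `N` and `T` is a polynomial in `P(X = 1)`, `P(Y = 1)` and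
`P(D = 1 | X = x, Y = y) = p_{D=1|0} + p_{C=1|xy} * (p_{D=1|1} - p_{D=1|0})`; as the latter is
affine in `p_{C=1|xy}`, the numerator factors as `h * (p_{D=1|1} - p_{D=1|0}) ^ 2 * ...`.
-/

open MeasureTheory ProbabilityTheory

variable {Ω : Type*} [MeasurableSpace Ω]

/-- The event that the random variable `X` takes the value `x`. -/
def ev (X : Ω → ℝ) (x : ℝ) : Set Ω := {ω | X ω = x}

/-- The probability of an event, as a real number. -/
noncomputable def pr (P : Measure Ω) (s : Set Ω) : ℝ := (P s).toReal

/-- The conditional probability `P(s | t)`, as a real number. -/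
noncomputable def cpr (P : Measure Ω) (s t : Set Ω) : ℝ := pr (P[|t]) s

/-- The covariance of two real-valued random variables. -/
noncomputable def rcov (P : Measure Ω) (X Y : Ω → ℝ) : ℝ :=
  ∫ ω, (X ω - ∫ ω', X ω' ∂P) * (Y ω - ∫ ω', Y ω' ∂P) ∂P

/-- The conditional covariance of two real-valued random variables given an event. -/
noncomputable def covCond (P : Measure Ω) (X Y : Ω → ℝ) (t : Set Ω) : ℝ :=
  rcov (P[|t]) X Y

/-- The conditional variance of a real-valued random variable given an event. -/
noncomputable def varCond (P : Measure Ω) (X : Ω → ℝ) (t : Set Ω) : ℝ :=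
  covCond P X X t

/-- A measurable `{0,1}`-valued random variable. -/
def IsBin (X : Ω → ℝ) : Prop := Measurable X ∧ ∀ ω, X ω = 0 ∨ X ω = 1

/-- The stratum-specific risk difference of `Y` comparing `X = 1` with `X = 0` within the
stratum `Z = z`. -/
noncomputable def strataRD (P : Measure Ω) (X Y Z : Ω → ℝ) (z : ℝ) : ℝ :=
  cpr P (ev Y 1) (ev X 1 ∩ ev Z z) - cpr P (ev Y 1) (ev X 0 ∩ ev Z z)

/-- The linear-regression weight of the stratum `Z = z`, proportional to
`var(X | Z = z) * P(Z = z)`. -/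
noncomputable def strataW (P : Measure Ω) (X Z : Ω → ℝ) (z : ℝ) : ℝ :=
  varCond P X (ev Z z) * pr P (ev Z z) /
    (varCond P X (ev Z 1) * pr P (ev Z 1) + varCond P X (ev Z 0) * pr P (ev Z 0))

lemma pr_nonneg (P : Measure Ω) (s : Set Ω) : 0 ≤ pr P s := ENNReal.toReal_nonneg

lemma pr_inter_add_pr_inter_compl (P : Measure Ω) [IsFiniteMeasure P] (s : Set Ω) {t : Set Ω}
    (ht : MeasurableSet t) : pr P (s ∩ t) + pr P (s ∩ tᶜ) = pr P s := by
  rw [← Set.sdiff_eq]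
  exact measureReal_inter_add_sdiff ht

lemma cpr_eq_div (P : Measure Ω) {t : Set Ω} (ht : MeasurableSet t) (s : Set Ω) :
    cpr P s t = pr P (t ∩ s) / pr P t := by
  rw [cpr, pr, pr, pr, cond_apply ht, ENNReal.toReal_mul, ENNReal.toReal_inv, inv_mul_eq_div]

namespace IsBin

variable {P : Measure Ω} {X : Ω → ℝ}

lemma measurableSet_ev (hX : IsBin X) (x : ℝ) : MeasurableSet (ev X x) :=
  hX.1 (measurableSet_singleton x)

lemma ev_zero (hX : IsBin X) : ev X 0 = (ev X 1)ᶜ := by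
  ext ω
  rcases hX.2 ω with h | h <;> simp [ev, h]

lemma pr_inter_add_pr_inter [IsFiniteMeasure P] (hX : IsBin X) (s : Set Ω) :
    pr P (s ∩ ev X 1) + pr P (s ∩ ev X 0) = pr P s := by
  rw [hX.ev_zero]
  exact pr_inter_add_pr_inter_compl P s (hX.measurableSet_ev 1)

lemma pr_one_add_pr_zero [IsProbabilityMeasure P] (hX : IsBin X) :
    pr P (ev X 1) + pr P (ev X 0) = 1 := by
  simpa [pr] using hX.pr_inter_add_pr_inter (P := P) Set.univ

lemma cpr_one_add_cpr_zero_le_one (hX : IsBin X) (t : Set Ω) :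
    cpr P (ev X 1) t + cpr P (ev X 0) t ≤ 1 := by
  rw [cpr, cpr, pr, pr, hX.ev_zero]
  exact (measureReal_add_measureReal_compl (hX.measurableSet_ev 1)).trans_le
    measureReal_le_one

lemma cpr_zero_eq_one_sub [IsFiniteMeasure P] (hX : IsBin X) {t : Set Ω} (ht : P t ≠ 0) :
    cpr P (ev X 0) t = 1 - cpr P (ev X 1) t := by
  have := cond_isProbabilityMeasure ht
  rw [cpr, cpr, pr, pr, hX.ev_zero]
  exact probReal_compl_eq_one_sub (hX.measurableSet_ev 1)

lemma rcov_self [IsProbabilityMeasure P] (hX : IsBin X) :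
    rcov P X X = pr P (ev X 1) * (1 - pr P (ev X 1)) := by
  have hX_eq : X = (ev X 1).indicator 1 := by
    funext ω
    rcases hX.2 ω with h | h <;> simp [ev, h]
  have hint : ∫ ω, X ω ∂P = pr P (ev X 1) := by
    conv_lhs => rw [hX_eq]
    exact integral_indicator_one (hX.measurableSet_ev 1)
  have hsq : ∀ ω, (X ω - pr P (ev X 1)) * (X ω - pr P (ev X 1)) =
      X ω * (1 - 2 * pr P (ev X 1)) + pr P (ev X 1) * pr P (ev X 1) := by
    intro ω
    rcases hX.2 ω with h | h <;> rw [h] <;> ring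
  have hXint : Integrable X P := by
    rw [hX_eq]
    exact (integrable_const 1).indicator (hX.measurableSet_ev 1)
  rw [rcov, hint, integral_congr_ae (Filter.Eventually.of_forall hsq),
    integral_add (hXint.mul_const _) (integrable_const _), integral_mul_const, hint,
    integral_const, probReal_univ, one_smul]
  ring

lemma varCond_mul_pr [IsFiniteMeasure P] (hX : IsBin X) {t : Set Ω} (ht : MeasurableSet t) :
    varCond P X t * pr P t = pr P (t ∩ ev X 1) * pr P (t ∩ ev X 0) / pr P t := by
  by_cases hPt : P t = 0
  · simp [pr, hPt]
  have := cond_isProbabilityMeasure hPt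
  have hpos : pr P t ≠ 0 := ENNReal.toReal_ne_zero.mpr ⟨hPt, measure_ne_top P t⟩
  rw [← hX.pr_inter_add_pr_inter t] at hpos
  rw [varCond, covCond, hX.rcov_self, ← cpr, cpr_eq_div P ht,
    ← hX.pr_inter_add_pr_inter t]
  field_simp
  ring

end IsBin

lemma strataRD_eq_div (P : Measure Ω) {X Y D : Ω → ℝ} (hX : Measurable X) (hD : Measurable D)
    (d : ℝ) :
    strataRD P X Y D d =
      pr P (ev X 1 ∩ ev Y 1 ∩ ev D d) / pr P (ev D d ∩ ev X 1) -
        pr P (ev X 0 ∩ ev Y 1 ∩ ev D d) / pr P (ev D d ∩ ev X 0) := by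
  have hXD : ∀ x, MeasurableSet (ev X x ∩ ev D d) :=
    fun x => (hX (measurableSet_singleton x)).inter (hD (measurableSet_singleton d))
  rw [strataRD, cpr_eq_div P (hXD 1), cpr_eq_div P (hXD 0), Set.inter_right_comm (ev X 1),
    Set.inter_right_comm (ev X 0), Set.inter_comm (ev X 1) (ev D d),
    Set.inter_comm (ev X 0) (ev D d)]

theorem strataW_mul_strataRD_add_eq (P : Measure Ω) [IsFiniteMeasure P] {X Y D : Ω → ℝ}
    (hX : IsBin X) (hD : IsBin D)
    (hXD : ∀ x d : ℝ, (x = 0 ∨ x = 1) → (d = 0 ∨ d = 1) → 0 < pr P (ev X x ∩ ev D d)) :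
    strataW P X D 1 * strataRD P X Y D 1 + strataW P X D 0 * strataRD P X Y D 0 =
      (pr P (ev D 0) * (pr P (ev X 1 ∩ ev Y 1 ∩ ev D 1) * pr P (ev D 1 ∩ ev X 0) -
            pr P (ev X 0 ∩ ev Y 1 ∩ ev D 1) * pr P (ev D 1 ∩ ev X 1)) +
          pr P (ev D 1) * (pr P (ev X 1 ∩ ev Y 1 ∩ ev D 0) * pr P (ev D 0 ∩ ev X 0) -
            pr P (ev X 0 ∩ ev Y 1 ∩ ev D 0) * pr P (ev D 0 ∩ ev X 1))) /
        (pr P (ev D 0) * pr P (ev D 1 ∩ ev X 1) * pr P (ev D 1 ∩ ev X 0) +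
          pr P (ev D 1) * pr P (ev D 0 ∩ ev X 1) * pr P (ev D 0 ∩ ev X 0)) := by
  simp only [Set.inter_comm (ev X _) (ev D _)] at hXD
  have hN11 := hXD 1 1 (by norm_num) (by norm_num)
  have hN01 := hXD 0 1 (by norm_num) (by norm_num)
  have hN10 := hXD 1 0 (by norm_num) (by norm_num)
  have hN00 := hXD 0 0 (by norm_num) (by norm_num)
  simp only [strataW, strataRD_eq_div P hX.1 hD.1, hX.varCond_mul_pr (hD.measurableSet_ev _)]
  rw [← hX.pr_inter_add_pr_inter (ev D 1), ← hX.pr_inter_add_pr_inter (ev D 0)]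
  field_simp

def YFactorizes (P : Measure Ω) (X Y C D : Ω → ℝ) : Prop :=
  ∀ x y γ d : ℝ, (x = 0 ∨ x = 1) → (y = 0 ∨ y = 1) → (γ = 0 ∨ γ = 1) → (d = 0 ∨ d = 1) →
    pr P (ev X x ∩ ev Y y ∩ ev C γ ∩ ev D d) =
      pr P (ev X x) * pr P (ev Y y) * cpr P (ev C γ) (ev X x ∩ ev Y y) *
        cpr P (ev D d) (ev C γ)

namespace YFactorizes

variable {P : Measure Ω} [IsProbabilityMeasure P] {X Y C D : Ω → ℝ}

lemma pr_inter_le_mul (hfact : YFactorizes P X Y C D) (hC : IsBin C) (hD : IsBin D)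
    {x y : ℝ} (hx : x = 0 ∨ x = 1) (hy : y = 0 ∨ y = 1) :
    pr P (ev X x ∩ ev Y y) ≤ pr P (ev X x) * pr P (ev Y y) := by
  have hab : 0 ≤ pr P (ev X x) * pr P (ev Y y) := mul_nonneg (pr_nonneg P _) (pr_nonneg P _)
  calc pr P (ev X x ∩ ev Y y)
      = pr P (ev X x) * pr P (ev Y y) *
          (cpr P (ev C 1) (ev X x ∩ ev Y y) *
              (cpr P (ev D 1) (ev C 1) + cpr P (ev D 0) (ev C 1)) +
            cpr P (ev C 0) (ev X x ∩ ev Y y) *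
              (cpr P (ev D 1) (ev C 0) + cpr P (ev D 0) (ev C 0))) := by
        rw [← hC.pr_inter_add_pr_inter (ev X x ∩ ev Y y),
          ← hD.pr_inter_add_pr_inter (ev X x ∩ ev Y y ∩ ev C 1),
          ← hD.pr_inter_add_pr_inter (ev X x ∩ ev Y y ∩ ev C 0),
          hfact x y 1 1 hx hy (by norm_num) (by norm_num),
          hfact x y 1 0 hx hy (by norm_num) (by norm_num),
          hfact x y 0 1 hx hy (by norm_num) (by norm_num),
          hfact x y 0 0 hx hy (by norm_num) (by norm_num)]
        ring
    _ ≤ pr P (ev X x) * pr P (ev Y y) *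
          (cpr P (ev C 1) (ev X x ∩ ev Y y) + cpr P (ev C 0) (ev X x ∩ ev Y y)) := by
        gcongr
        · exact mul_le_of_le_one_right (pr_nonneg _ _) (hD.cpr_one_add_cpr_zero_le_one _)
        · exact mul_le_of_le_one_right (pr_nonneg _ _) (hD.cpr_one_add_cpr_zero_le_one _)
    _ ≤ pr P (ev X x) * pr P (ev Y y) :=
        mul_le_of_le_one_right hab (hC.cpr_one_add_cpr_zero_le_one _)

lemma pr_inter_eq_mul (hfact : YFactorizes P X Y C D) (hY : IsBin Y) (hC : IsBin C)
    (hD : IsBin D) {x y : ℝ} (hx : x = 0 ∨ x = 1) (hy : y = 0 ∨ y = 1) :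
    pr P (ev X x ∩ ev Y y) = pr P (ev X x) * pr P (ev Y y) := by
  have h1 := hfact.pr_inter_le_mul hC hD hx (y := 1) (by norm_num)
  have h0 := hfact.pr_inter_le_mul hC hD hx (y := 0) (by norm_num)
  have hsplit := hY.pr_inter_add_pr_inter (P := P) (ev X x)
  have hY_total : pr P (ev X x) * (pr P (ev Y 1) + pr P (ev Y 0)) = pr P (ev X x) := by
    rw [hY.pr_one_add_pr_zero, mul_one]
  rcases hy with rfl | rfl <;> linarith

lemma pr_inter_inter_ev_one (hfact : YFactorizes P X Y C D) (hY : IsBin Y) (hC : IsBin C)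
    (hD : IsBin D) {x y : ℝ} (hx : x = 0 ∨ x = 1) (hy : y = 0 ∨ y = 1) :
    pr P (ev X x ∩ ev Y y ∩ ev D 1) = pr P (ev X x) * pr P (ev Y y) *
      (cpr P (ev C 1) (ev X x ∩ ev Y y) * cpr P (ev D 1) (ev C 1) +
        (1 - cpr P (ev C 1) (ev X x ∩ ev Y y)) * cpr P (ev D 1) (ev C 0)) := by
  have hC0 : pr P (ev X x) * pr P (ev Y y) * cpr P (ev C 0) (ev X x ∩ ev Y y) =
      pr P (ev X x) * pr P (ev Y y) * (1 - cpr P (ev C 1) (ev X x ∩ ev Y y)) := by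
    by_cases hXY : P (ev X x ∩ ev Y y) = 0
    -- on a null cell `cpr` is junk, but the prefactor vanishes by independence
    · rw [← hfact.pr_inter_eq_mul hY hC hD hx hy, pr, hXY, ENNReal.toReal_zero, zero_mul,
        zero_mul]
    · rw [hC.cpr_zero_eq_one_sub hXY]
  rw [← hC.pr_inter_add_pr_inter (ev X x ∩ ev Y y ∩ ev D 1),
    Set.inter_right_comm _ (ev D 1), Set.inter_right_comm _ (ev D 1),
    hfact x y 1 1 hx hy (by norm_num) (by norm_num), hfact x y 0 1 hx hy (by norm_num) (by norm_num)]
  linear_combination cpr P (ev D 1) (ev C 0) * hC0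

lemma lm_numerator_eq (hfact : YFactorizes P X Y C D) (hX : IsBin X) (hY : IsBin Y)
    (hC : IsBin C) (hD : IsBin D) :
    pr P (ev D 0) * (pr P (ev X 1 ∩ ev Y 1 ∩ ev D 1) * pr P (ev D 1 ∩ ev X 0) -
          pr P (ev X 0 ∩ ev Y 1 ∩ ev D 1) * pr P (ev D 1 ∩ ev X 1)) +
        pr P (ev D 1) * (pr P (ev X 1 ∩ ev Y 1 ∩ ev D 0) * pr P (ev D 0 ∩ ev X 0) -
          pr P (ev X 0 ∩ ev Y 1 ∩ ev D 0) * pr P (ev D 0 ∩ ev X 1)) =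
      -((pr P (ev X 1) *
            (cpr P (ev C 1) (ev X 1 ∩ ev Y 1) - cpr P (ev C 1) (ev X 1 ∩ ev Y 0)) +
          pr P (ev X 0) *
            (cpr P (ev C 1) (ev X 0 ∩ ev Y 1) - cpr P (ev C 1) (ev X 0 ∩ ev Y 0))) *
        (pr P (ev Y 1) *
            (cpr P (ev C 1) (ev X 1 ∩ ev Y 1) - cpr P (ev C 1) (ev X 0 ∩ ev Y 1)) +
          pr P (ev Y 0) *
            (cpr P (ev C 1) (ev X 1 ∩ ev Y 0) - cpr P (ev C 1) (ev X 0 ∩ ev Y 0)))) *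
        (cpr P (ev D 1) (ev C 1) - cpr P (ev D 1) (ev C 0)) ^ 2 *
        pr P (ev X 1) * pr P (ev X 0) * pr P (ev Y 1) * pr P (ev Y 0) := by
  have hD_marg : ∀ d, pr P (ev D d) = pr P (ev D d ∩ ev X 1) + pr P (ev D d ∩ ev X 0) :=
    fun d => (hX.pr_inter_add_pr_inter (ev D d)).symm
  have hXD0 : ∀ x, pr P (ev D 0 ∩ ev X x) = pr P (ev X x) - pr P (ev D 1 ∩ ev X x) := by
    intro x
    rw [← hD.pr_inter_add_pr_inter (ev X x), Set.inter_comm (ev D 0), Set.inter_comm (ev D 1)]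
    ring
  have hXYD0 : ∀ x, (x = 0 ∨ x = 1) → pr P (ev X x ∩ ev Y 1 ∩ ev D 0) =
      pr P (ev X x) * pr P (ev Y 1) - pr P (ev X x ∩ ev Y 1 ∩ ev D 1) := by
    intro x hx
    rw [← hfact.pr_inter_eq_mul hY hC hD hx (by norm_num),
      ← hD.pr_inter_add_pr_inter (ev X x ∩ ev Y 1)]
    ring
  have hXD1 : ∀ x, pr P (ev D 1 ∩ ev X x) =
      pr P (ev X x ∩ ev Y 1 ∩ ev D 1) + pr P (ev X x ∩ ev Y 0 ∩ ev D 1) := by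
    intro x
    rw [← hY.pr_inter_add_pr_inter (ev D 1 ∩ ev X x), Set.inter_comm (ev D 1)]
    simp only [Set.inter_right_comm (ev X x) (ev D 1)]
  have hρ := fun x y hx hy => hfact.pr_inter_inter_ev_one (x := x) (y := y) hY hC hD hx hy
  rw [hD_marg 0, hD_marg 1, hXD0 1, hXD0 0, hXYD0 1 (by norm_num), hXYD0 0 (by norm_num),
    hXD1 1, hXD1 0, hρ 1 1 (by norm_num) (by norm_num), hρ 1 0 (by norm_num) (by norm_num),
    hρ 0 1 (by norm_num) (by norm_num), hρ 0 0 (by norm_num) (by norm_num),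
    eq_sub_of_add_eq' (hX.pr_one_add_pr_zero (P := P)),
    eq_sub_of_add_eq' (hY.pr_one_add_pr_zero (P := P))]
  ring

end YFactorizes

theorem Y_bias_lm_general (P : Measure Ω) [IsProbabilityMeasure P]
    (X Y C D : Ω → ℝ) (hX : IsBin X) (hY : IsBin Y) (hC : IsBin C) (hD : IsBin D)
    (hfact : ∀ x y γ d : ℝ, (x = 0 ∨ x = 1) → (y = 0 ∨ y = 1) → (γ = 0 ∨ γ = 1) →
      (d = 0 ∨ d = 1) →
      pr P (ev X x ∩ ev Y y ∩ ev C γ ∩ ev D d) =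
        pr P (ev X x) * pr P (ev Y y) * cpr P (ev C γ) (ev X x ∩ ev Y y) *
          cpr P (ev D d) (ev C γ))
    (hXD : ∀ x d : ℝ, (x = 0 ∨ x = 1) → (d = 0 ∨ d = 1) → 0 < pr P (ev X x ∩ ev D d)) :
    strataW P X D 1 * strataRD P X Y D 1 + strataW P X D 0 * strataRD P X Y D 0 =
      -((pr P (ev X 1) *
            (cpr P (ev C 1) (ev X 1 ∩ ev Y 1) - cpr P (ev C 1) (ev X 1 ∩ ev Y 0)) +
          pr P (ev X 0) *
            (cpr P (ev C 1) (ev X 0 ∩ ev Y 1) - cpr P (ev C 1) (ev X 0 ∩ ev Y 0))) *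
        (pr P (ev Y 1) *
            (cpr P (ev C 1) (ev X 1 ∩ ev Y 1) - cpr P (ev C 1) (ev X 0 ∩ ev Y 1)) +
          pr P (ev Y 0) *
            (cpr P (ev C 1) (ev X 1 ∩ ev Y 0) - cpr P (ev C 1) (ev X 0 ∩ ev Y 0)))) *
        (cpr P (ev D 1) (ev C 1) - cpr P (ev D 1) (ev C 0)) ^ 2 *
        pr P (ev X 1) * pr P (ev X 0) * pr P (ev Y 1) * pr P (ev Y 0) /
        (pr P (ev D 0) * pr P (ev D 1 ∩ ev X 1) * pr P (ev D 1 ∩ ev X 0) +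
          pr P (ev D 1) * pr P (ev D 0 ∩ ev X 1) * pr P (ev D 0 ∩ ev X 0)) := by
  rw [strataW_mul_strataRD_add_eq P hX hD hXD]
  congr 1
  exact YFactorizes.lm_numerator_eq hfact hX hY hC hD

/-- Y-bias due to linear regression adjustment for `D`. -/
theorem Y_bias_lm (P : Measure Ω) [IsProbabilityMeasure P]
    (X Y C D : Ω → ℝ) (hX : IsBin X) (hY : IsBin Y) (hC : IsBin C) (hD : IsBin D)
    (hX1 : 0 < pr P (ev X 1)) (hX1' : pr P (ev X 1) < 1)
    (hY1 : 0 < pr P (ev Y 1)) (hY1' : pr P (ev Y 1) < 1)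
    (hfact : ∀ x y γ d : ℝ, (x = 0 ∨ x = 1) → (y = 0 ∨ y = 1) → (γ = 0 ∨ γ = 1) →
      (d = 0 ∨ d = 1) →
      pr P (ev X x ∩ ev Y y ∩ ev C γ ∩ ev D d) =
        pr P (ev X x) * pr P (ev Y y) * cpr P (ev C γ) (ev X x ∩ ev Y y) *
          cpr P (ev D d) (ev C γ))
    (hXD : ∀ x d : ℝ, (x = 0 ∨ x = 1) → (d = 0 ∨ d = 1) → 0 < pr P (ev X x ∩ ev D d)) :
    strataW P X D 1 * strataRD P X Y D 1 + strataW P X D 0 * strataRD P X Y D 0 =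
      -((pr P (ev X 1) *
            (cpr P (ev C 1) (ev X 1 ∩ ev Y 1) - cpr P (ev C 1) (ev X 1 ∩ ev Y 0)) +
          pr P (ev X 0) *
            (cpr P (ev C 1) (ev X 0 ∩ ev Y 1) - cpr P (ev C 1) (ev X 0 ∩ ev Y 0))) *
        (pr P (ev Y 1) *
            (cpr P (ev C 1) (ev X 1 ∩ ev Y 1) - cpr P (ev C 1) (ev X 0 ∩ ev Y 1)) +
          pr P (ev Y 0) *
            (cpr P (ev C 1) (ev X 1 ∩ ev Y 0) - cpr P (ev C 1) (ev X 0 ∩ ev Y 0)))) *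
        (cpr P (ev D 1) (ev C 1) - cpr P (ev D 1) (ev C 0)) ^ 2 *
        pr P (ev X 1) * pr P (ev X 0) * pr P (ev Y 1) * pr P (ev Y 0) /
        (pr P (ev D 0) * pr P (ev D 1 ∩ ev X 1) * pr P (ev D 1 ∩ ev X 0) +
          pr P (ev D 1) * pr P (ev D 0 ∩ ev X 1) * pr P (ev D 0 ∩ ev X 0)) :=
  Y_bias_lm_general P X Y C D hX hY hC hD hfact hXD
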